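/- Let F be the Arikan kernel over F_2, m ≥ 1, A = F^{⊗m}, and 0 ≤ r < m. Let R_r ⊆ F_2^{2^m} be the linear span of the rows of A whose indices i satisfy wt(i) > r (the Reed–Muller code of order m−r−1). If C ⊆ R_r is any linear subcode, then the dynamic frozen index set of C with respect to A contains every index of weight at most r: F_A(C) ⊇ { i : 0 ≤ i < 2^m, wt(i) ≤ r }. -/

import Mathlib

/-! The unit vector `e_t` witnesses `t ∈ F_A(C)`. Since `A = F^{⊗m}` is lower unitriangular, hence
invertible, `uA ∈ C ⊆ span {e_i A : wt i > r}` forces `u` into `span {e_i : wt i > r}`, so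
`u · e_t = u_t = 0` whenever `wt t ≤ r`. -/

/-- The binary weight `wt i`: the number of ones in the binary expansion of `i`. -/
def wt (i : ℕ) : ℕ := (Nat.digits 2 i).sum

/-- The Arikan kernel: the 2×2 matrix over `F_2` with rows `(1,0)` and `(1,1)`. -/
def arikanKernel : Matrix (Fin 2) (Fin 2) (ZMod 2) := !![1, 0; 1, 1]

/-- The `m`-fold Kronecker power of the Arikan kernel, a `2^m × 2^m` matrix over `F_2`.
The index pair `(a, b)` of the Kronecker product `F ⊗ F^{⊗m}` is identified with the
integer `a·2^m + b`, i.e. `a = i / 2^m` and `b = i % 2^m`. -/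
def arikanKronPow : (m : ℕ) → Matrix (Fin (2 ^ m)) (Fin (2 ^ m)) (ZMod 2)
  | 0 => 1
  | m + 1 => Matrix.of fun i j =>
      arikanKernel ⟨i.val / 2 ^ m, Nat.div_lt_of_lt_mul (by rw [← pow_succ]; exact i.isLt)⟩
          ⟨j.val / 2 ^ m, Nat.div_lt_of_lt_mul (by rw [← pow_succ]; exact j.isLt)⟩ *
        arikanKronPow m ⟨i.val % 2 ^ m, Nat.mod_lt _ (by positivity)⟩
          ⟨j.val % 2 ^ m, Nat.mod_lt _ (by positivity)⟩

/-- The dynamic frozen index set `F_A(C)` of a linear code `C ⊆ F_q^n` with respect to an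
invertible matrix `A`: the set of indices `t` that arise as the last nonzero position of
some nonzero vector `v` in the orthogonal complement (w.r.t. the standard bilinear form)
of the subspace `{u : uA ∈ C}`. -/
def frozenSet {F : Type*} [Field F] {n : ℕ} (A : Matrix (Fin n) (Fin n) F)
    (C : Submodule F (Fin n → F)) : Set (Fin n) :=
  {t | ∃ v : Fin n → F,
    (∀ u : Fin n → F, Matrix.vecMul u A ∈ C → ∑ s, u s * v s = 0) ∧
    v ≠ 0 ∧ v t ≠ 0 ∧ ∀ s, t < s → v s = 0}

theorem mem_frozenSet_of_forall_vecMul_mem {F : Type*} [Field F] {n : ℕ}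
    (A : Matrix (Fin n) (Fin n) F) (C : Submodule F (Fin n → F)) {t : Fin n}
    (h : ∀ u : Fin n → F, Matrix.vecMul u A ∈ C → u t = 0) :
    t ∈ frozenSet A C := by
  refine ⟨Pi.single t 1, fun u hu => ?_, by simp, by simp, fun s hs => ?_⟩
  · simpa [Pi.single_apply] using h u hu
  · exact Pi.single_eq_of_ne hs.ne' 1

namespace Matrix

variable {R ι : Type*} [CommRing R] [Fintype ι] [DecidableEq ι]

/-- `u t` is the value at `u ᵥ* A` of the functional `w ↦ (w ᵥ* A⁻¹) t`, which kills every row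
`A i` with `i ≠ t`. -/
theorem apply_eq_zero_of_vecMul_mem_span_rows (A : Matrix ι ι R) (hA : IsUnit A.det)
    {p : ι → Prop} {t : ι} (ht : ¬ p t) {u : ι → R}
    (hu : u ᵥ* A ∈ Submodule.span R {v | ∃ i, p i ∧ v = A i}) : u t = 0 := by
  have hrows : Submodule.span R {v | ∃ i, p i ∧ v = A i} ≤
      LinearMap.ker ((LinearMap.proj t).comp A⁻¹.vecMulLinear) := by
    rw [Submodule.span_le]
    rintro _ ⟨i, hi, rfl⟩
    have hit : t ≠ i := by rintro rfl; exact ht hi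
    change (A * A⁻¹) i t = 0
    rw [mul_nonsing_inv A hA, one_apply_ne hit.symm]
  simpa [vecMul_vecMul, mul_nonsing_inv A hA] using hrows hu

end Matrix

theorem arikanKernel_isLowerTriangular : arikanKernel.IsLowerTriangular := by
  intro a b (h : a < b)
  fin_cases a <;> fin_cases b <;> simp_all [arikanKernel]

theorem arikanKronPow_isLowerTriangular :
    ∀ m, (arikanKronPow m).IsLowerTriangular
  | 0 => fun i j (h : i < j) => by
    have := i.isLt; have := j.isLt
    simp only [Fin.lt_def, pow_zero] at *
    omega
  | m + 1 => fun i j (h : i < j) => by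
    show arikanKernel _ _ * arikanKronPow m _ _ = 0
    rcases (Nat.div_le_div_right (c := 2 ^ m) h.le).lt_or_eq with hdiv | hdiv
    · rw [arikanKernel_isLowerTriangular (show _ < _ from hdiv), zero_mul]
    · have hmod : i.val % 2 ^ m < j.val % 2 ^ m := by
        have := Nat.div_add_mod i.val (2 ^ m)
        have := Nat.div_add_mod j.val (2 ^ m)
        rw [Fin.lt_def] at h
        rw [hdiv] at *
        omega
      rw [arikanKronPow_isLowerTriangular m (show _ < _ from hmod), mul_zero]

theorem arikanKernel_apply_self (a : Fin 2) : arikanKernel a a = 1 := by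
  fin_cases a <;> simp [arikanKernel]

theorem arikanKronPow_apply_self : ∀ {m : ℕ} (i : Fin (2 ^ m)), arikanKronPow m i i = 1
  | 0, i => Matrix.one_apply_eq i
  | m + 1, i => by
    show arikanKernel _ _ * arikanKronPow m _ _ = 1
    rw [arikanKernel_apply_self, arikanKronPow_apply_self, one_mul]

theorem det_arikanKronPow (m : ℕ) : (arikanKronPow m).det = 1 := by
  rw [Matrix.det_of_isLowerTriangular _ (arikanKronPow_isLowerTriangular m)]
  simp [arikanKronPow_apply_self]

theorem frozenSet_subcode_reed_muller_general {m r : ℕ}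
    (C : Submodule (ZMod 2) (Fin (2 ^ m) → ZMod 2))
    (hC : C ≤ Submodule.span (ZMod 2)
      {v | ∃ i : Fin (2 ^ m), r < wt i.val ∧ v = arikanKronPow m i}) :
    {i : Fin (2 ^ m) | wt i.val ≤ r} ⊆ frozenSet (arikanKronPow m) C := by
  intro t (ht : wt t.val ≤ r)
  refine mem_frozenSet_of_forall_vecMul_mem _ C fun u hu => ?_
  exact (arikanKronPow m).apply_eq_zero_of_vecMul_mem_span_rows
    (p := fun i => r < wt i.val) (by simp [det_arikanKronPow]) (not_lt.mpr ht) (hC hu)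

/-- Let `A = F^{⊗m}` and let `R_r` be the span of the rows of `A` whose
indices have binary weight `> r` (the Reed–Muller code of order `m−r−1`). If `C ⊆ R_r` is
any linear subcode, then `F_A(C)` contains every index of weight at most `r`. -/
theorem frozenSet_subcode_reed_muller {m r : ℕ} (hm : 1 ≤ m) (hr : r < m)
    (C : Submodule (ZMod 2) (Fin (2 ^ m) → ZMod 2))
    (hC : C ≤ Submodule.span (ZMod 2)
      {v | ∃ i : Fin (2 ^ m), r < wt i.val ∧ v = arikanKronPow m i}) :
    {i : Fin (2 ^ m) | wt i.val ≤ r} ⊆ frozenSet (arikanKronPow m) C :=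
  frozenSet_subcode_reed_muller_general C hC
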